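/- For the quadratic system above, the hypersurface {x : xᵀBx = 0} is invariant under the flow: if x(0)ᵀBx(0) = 0 then x(t)ᵀBx(t) = 0 for all t in the interval of existence. -/

import Mathlib

/-!
For symmetric `B` the vector field equals `(xᵀBx) w - 2 (wᵀBx) x + V x`, so along a solution
`b = xᵀBx` satisfies `ḃ = c b` with the continuous coefficient `c = λ - 2 wᵀBx`. Then
`b · exp (-∫ c)` has zero derivative, hence is constant on the interval, and it vanishes at `0`.
-/

open Matrix Set

namespace Matrix

variable {R ι : Type*} [CommRing R] [Fintype ι]

theorem IsSymm.dotProduct_mulVec_comm {B : Matrix ι ι R} (hB : B.IsSymm) (x y : ι → R) :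
    x ⬝ᵥ B *ᵥ y = y ⬝ᵥ B *ᵥ x := by
  rw [← dotProduct_transpose_mulVec, hB.eq]

theorem dotProduct_mulVec_add_of_transpose_mul_add {B V : Matrix ι ι R} {l : R}
    (hV : Vᵀ * B + B * V = l • B) (y : ι → R) :
    V *ᵥ y ⬝ᵥ B *ᵥ y + y ⬝ᵥ B *ᵥ (V *ᵥ y) = l * (y ⬝ᵥ B *ᵥ y) := by
  have := congrArg (fun M => y ⬝ᵥ M *ᵥ y) hV
  simp only [add_mulVec, smul_mulVec, ← mulVec_mulVec, dotProduct_add, dotProduct_smul,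
    smul_eq_mul, mulVec_transpose] at this
  rwa [dotProduct_comm y, ← dotProduct_mulVec, dotProduct_comm] at this

variable [DecidableEq ι]

theorem dotProduct_mulVec_of_eq_sub_vecMulVec {B A : Matrix ι ι R} (hB : B.IsSymm)
    {w : ι → R} {c : R} {i : ι}
    (hA : A = c • B - B * vecMulVec w (Pi.single i 1) - vecMulVec (Pi.single i 1) w * B)
    (y : ι → R) :
    y ⬝ᵥ A *ᵥ y = c * (y ⬝ᵥ B *ᵥ y) - 2 * (w ⬝ᵥ B *ᵥ y) * y i := by
  have hBw : y ⬝ᵥ B *ᵥ (vecMulVec w (Pi.single i 1) *ᵥ y) = y i * (w ⬝ᵥ B *ᵥ y) := by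
    rw [vecMulVec_mulVec, single_one_dotProduct, op_smul_eq_smul, mulVec_smul,
      dotProduct_smul, smul_eq_mul, hB.dotProduct_mulVec_comm]
  have hwB : y ⬝ᵥ vecMulVec (Pi.single i 1) w *ᵥ (B *ᵥ y) = (w ⬝ᵥ B *ᵥ y) * y i := by
    rw [vecMulVec_mulVec, op_smul_eq_smul, dotProduct_smul, dotProduct_single_one, smul_eq_mul]
  rw [hA, sub_mulVec, sub_mulVec, smul_mulVec, ← mulVec_mulVec, ← mulVec_mulVec,
    dotProduct_sub, dotProduct_sub, dotProduct_smul, smul_eq_mul, hBw, hwB]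
  ring

end Matrix

section QuadraticField

variable {R ι : Type*} [CommRing R] [Fintype ι]

def quadraticField (A : ι → Matrix ι ι R) (V : Matrix ι ι R) (y : ι → R) : ι → R :=
  fun i => y ⬝ᵥ A i *ᵥ y + V i ⬝ᵥ y

variable [DecidableEq ι] {B V : Matrix ι ι R} {A : ι → Matrix ι ι R} {w : ι → R}

theorem quadraticField_eq (hB : B.IsSymm)
    (hA : ∀ i, A i = w i • B - B * vecMulVec w (Pi.single i 1) - vecMulVec (Pi.single i 1) w * B)
    (y : ι → R) :
    quadraticField A V y = (y ⬝ᵥ B *ᵥ y) • w - (2 * (w ⬝ᵥ B *ᵥ y)) • y + V *ᵥ y := by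
  ext i
  rw [quadraticField, dotProduct_mulVec_of_eq_sub_vecMulVec hB (hA i)]
  simp only [Pi.add_apply, Pi.sub_apply, Pi.smul_apply, smul_eq_mul, mulVec]
  ring

theorem quadraticField_dotProduct_mulVec_add {l : R} (hB : B.IsSymm)
    (hV : Vᵀ * B + B * V = l • B)
    (hA : ∀ i, A i = w i • B - B * vecMulVec w (Pi.single i 1) - vecMulVec (Pi.single i 1) w * B)
    (y : ι → R) :
    quadraticField A V y ⬝ᵥ B *ᵥ y + y ⬝ᵥ B *ᵥ quadraticField A V y
      = (l - 2 * (w ⬝ᵥ B *ᵥ y)) * (y ⬝ᵥ B *ᵥ y) := by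
  have hVy := dotProduct_mulVec_add_of_transpose_mul_add hV y
  rw [quadraticField_eq hB hA, mulVec_add, mulVec_sub, mulVec_smul, mulVec_smul, dotProduct_add,
    dotProduct_sub, dotProduct_smul, dotProduct_smul, add_dotProduct, sub_dotProduct,
    smul_dotProduct, smul_dotProduct, hB.dotProduct_mulVec_comm y w]
  simp only [smul_eq_mul]
  linear_combination hVy

end QuadraticField

section Calculus

variable {𝕜 ι : Type*} [NontriviallyNormedField 𝕜] [Fintype ι] {u v : 𝕜 → ι → 𝕜}
  {u' v' : ι → 𝕜} {t : 𝕜}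

theorem HasDerivAt.dotProduct (hu : HasDerivAt u u' t) (hv : HasDerivAt v v' t) :
    HasDerivAt (fun s => u s ⬝ᵥ v s) (u' ⬝ᵥ v t + u t ⬝ᵥ v') t := by
  rw [_root_.dotProduct, _root_.dotProduct, ← Finset.sum_add_distrib]
  exact HasDerivAt.fun_sum fun i _ => (hasDerivAt_pi.1 hu i).mul (hasDerivAt_pi.1 hv i)

theorem HasDerivAt.mulVec (M : Matrix ι ι 𝕜) (hu : HasDerivAt u u' t) :
    HasDerivAt (fun s => M *ᵥ u s) (M *ᵥ u') t := by
  refine hasDerivAt_pi.2 fun i => ((hasDerivAt_const t (M i)).dotProduct hu).congr_deriv ?_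
  rw [zero_dotProduct, zero_add]
  rfl

end Calculus

theorem hasDerivAt_intervalIntegral_of_continuousOn {s : Set ℝ} (hs : IsOpen s)
    (hs' : s.OrdConnected) {c : ℝ → ℝ} (hc : ContinuousOn c s) {a t : ℝ} (ha : a ∈ s)
    (ht : t ∈ s) : HasDerivAt (fun u => ∫ r in a..u, c r) (c t) t :=
  intervalIntegral.integral_hasDerivAt_right
    ((hc.mono (hs'.uIcc_subset ha ht)).intervalIntegrable)
    (hc.stronglyMeasurableAtFilter hs t ht)
    ((hc t ht).continuousAt (hs.mem_nhds ht))

theorem eqOn_zero_of_hasDerivAt_eq_mul {s : Set ℝ} (hs : IsOpen s) (hs' : s.OrdConnected)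
    {b c : ℝ → ℝ} (hc : ContinuousOn c s) (hb : ∀ t ∈ s, HasDerivAt b (c t * b t) t)
    {t₀ : ℝ} (ht₀ : t₀ ∈ s) (hb₀ : b t₀ = 0) : EqOn b 0 s := by
  set C := fun u => ∫ r in t₀..u, c r
  have hC (t) (ht : t ∈ s) : HasDerivAt C (c t) t :=
    hasDerivAt_intervalIntegral_of_continuousOn hs hs' hc ht₀ ht
  have hg (t) (ht : t ∈ s) : HasDerivAt (fun u => b u * Real.exp (-C u)) 0 t :=
    ((hb t ht).fun_mul (hC t ht).fun_neg.exp).congr_deriv (by ring)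
  intro t ht
  have hconst := hs.is_const_of_deriv_eq_zero hs'.isPreconnected
    (fun u hu => (hg u hu).differentiableAt.differentiableWithinAt)
    (fun u hu => (hg u hu).deriv) ht ht₀
  simpa [hb₀, Real.exp_ne_zero] using hconst

theorem hypersurface_invariant {n : ℕ} (B : Matrix (Fin n) (Fin n) ℝ) (hB : B.IsSymm)
    (w : Fin n → ℝ) (l : ℝ) (v : Fin n → Fin n → ℝ)
    (hV : (Matrix.of v).transpose * B + B * (Matrix.of v) = l • B)
    (A : Fin n → Matrix (Fin n) (Fin n) ℝ)
    (hA : ∀ i, A i = w i • B - B * Matrix.vecMulVec w (Pi.single i 1)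
      - Matrix.vecMulVec (Pi.single i 1) w * B)
    (t₁ t₂ : ℝ) (ht₁ : t₁ < 0) (ht₂ : 0 < t₂)
    (x : ℝ → Fin n → ℝ)
    (hx : ∀ t ∈ Set.Ioo t₁ t₂, ∀ i, HasDerivAt (fun s => x s i)
      (x t ⬝ᵥ (A i).mulVec (x t) + v i ⬝ᵥ x t) t)
    (hx0 : x 0 ⬝ᵥ B.mulVec (x 0) = 0) :
    ∀ t ∈ Set.Ioo t₁ t₂, x t ⬝ᵥ B.mulVec (x t) = 0 := by
  have hx' (t) (ht : t ∈ Ioo t₁ t₂) : HasDerivAt x (quadraticField A (of v) (x t)) t :=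
    hasDerivAt_pi.2 (hx t ht)
  have hxc : ContinuousOn x (Ioo t₁ t₂) := HasDerivAt.continuousOn hx'
  refine eqOn_zero_of_hasDerivAt_eq_mul isOpen_Ioo ordConnected_Ioo
    (c := fun s => l - 2 * (w ⬝ᵥ B *ᵥ x s)) (by fun_prop) (fun t ht => ?_) ⟨ht₁, ht₂⟩ hx0
  rw [← quadraticField_dotProduct_mulVec_add hB hV hA]
  exact (hx' t ht).dotProduct ((hx' t ht).mulVec B)
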